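/- Let K be a semiring, (Σ,M) an OP alphabet, φ a formula of the weighted logic MSO(K,(Σ,M)), and V a finite set of variables with free(φ)⊆V. Then ⟦φ⟧_V(w,σ)=⟦φ⟧(w,σ↾free(φ)) for each valid (w,σ)∈(Σ_V,M_V)^+. Furthermore, ⟦φ⟧ is regular (respectively strictly regular) if and only if ⟦φ⟧_V is regular (respectively strictly regular). -/

import Mathlib

namespace WOP

/-- Precedence relations: yields precedence, equal in precedence, takes precedence. -/
inductive PrecRel where
  | lt | eq | gt
deriving DecidableEq

/-- An operator precedence matrix on `Σ ∪ {#}`, where `none` encodes `#`.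
It assigns at most one precedence relation to each ordered pair, with
`# ⋖ a` and `a ⋗ #` for every letter `a`. -/
structure OPM (A : Type) where
  rel : Option A → Option A → Option PrecRel
  hash_lt : ∀ a : A, rel none (some a) = some .lt
  hash_gt : ∀ a : A, rel (some a) none = some .gt

variable {A B K : Type}

/-- The letter of `#w#` at position `i` (positions `0` and `> |w|` carry `#`, i.e. `none`). -/
def letterAt (w : List A) (i : ℕ) : Option A :=
  if i = 0 then none else w[i - 1]?

section ChainRel

variable (M : OPM A) (L : ℕ → Option A)

mutual
  /-- `ChainMid M L k j`: there are `k = k_s < ... < k_m = j` with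
  `L k_s ≐ L k_{s+1} ≐ ... ≐ L k_{m-1} ⋗ L k_m` and the gap condition between
  consecutive elements. -/
  inductive ChainMid : ℕ → ℕ → Prop where
    | last {k j : ℕ} : M.rel (L k) (L j) = some .gt → ChainGap k j → ChainMid k j
    | step {k k' j : ℕ} : M.rel (L k) (L k') = some .eq → ChainGap k k' →
        ChainMid k' j → ChainMid k j

  /-- The gap condition between consecutive elements of a chain:
  adjacent positions or a chain. -/
  inductive ChainGap : ℕ → ℕ → Prop where
    | adj (k : ℕ) : ChainGap k (k + 1)
    | chain {k k' : ℕ} : Chain k k' → ChainGap k k'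

  /-- The chain relation `i ⤳ j`: there are positions `i = k_1 < ... < k_m = j` with
  `L k_1 ⋖ L k_2 ≐ ... ≐ L k_{m-1} ⋗ L k_m` such that consecutive `k`'s are adjacent
  or themselves related by `⤳`. -/
  inductive Chain : ℕ → ℕ → Prop where
    | mk {i k j : ℕ} : M.rel (L i) (L k) = some .lt → ChainGap i k → ChainMid k j →
        Chain i j
end

end ChainRel

/-- `(Σ,M)^+`: the set of nonempty words compatible with `M`, i.e. `0 ⤳ |w|+1` in `#w#`. -/
def OPWords (M : OPM A) : Set (List A) :=
  {w | w ≠ [] ∧ Chain M (letterAt w) 0 (w.length + 1)}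

/-- An (unweighted) operator precedence automaton over the alphabet `A`. -/
structure OPA (A : Type) where
  Q : Type
  fin : Fintype Q
  I : Set Q
  F : Set Q
  δpush : Set (Q × A × Q)
  δshift : Set (Q × A × Q)
  δpop : Set (Q × Q × Q)

/-- A weighted operator precedence automaton over the alphabet `A` and weights in `K`. -/
structure WOPA (A K : Type) extends OPA A where
  wtpush : Q × A × Q → K
  wtshift : Q × A × Q → K
  wtpop : Q × Q × Q → K

/-- A configuration: a stack of (symbol, state) pairs, a current state,
and the remaining input. -/
structure Config (A Q : Type) where
  stack : List (A × Q)
  state : Q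
  input : List A

/-- The moves (transitions) an OPA may take. -/
inductive Move (A Q : Type) where
  | push (q : Q) (b : A) (r : Q)
  | shift (q : Q) (b : A) (r : Q)
  | pop (q p r : Q)

/-- The topmost stack symbol (`none` = `#` for the empty stack). -/
def topSym {Q : Type} (st : List (A × Q)) : Option A := st.head?.map Prod.fst

/-- One step of an OPA on an OP alphabet `(A, M)`. -/
inductive Exec (M : OPM A) (T : OPA A) : Config A T.Q → Move A T.Q → Config A T.Q → Prop where
  | push {st : List (A × T.Q)} {q r : T.Q} {b : A} {x : List A} :
      M.rel (topSym st) (some b) = some .lt → (q, b, r) ∈ T.δpush →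
      Exec M T ⟨st, q, b :: x⟩ (.push q b r) ⟨(b, q) :: st, r, x⟩
  | shift {st : List (A × T.Q)} {p q r : T.Q} {a b : A} {x : List A} :
      M.rel (some a) (some b) = some .eq → (q, b, r) ∈ T.δshift →
      Exec M T ⟨(a, p) :: st, q, b :: x⟩ (.shift q b r) ⟨(b, p) :: st, r, x⟩
  | pop {st : List (A × T.Q)} {p q r : T.Q} {a : A} {x : List A} :
      M.rel (some a) x.head? = some .gt → (q, p, r) ∈ T.δpop →
      Exec M T ⟨(a, p) :: st, q, x⟩ (.pop q p r) ⟨st, r, x⟩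

/-- Execution of a sequence of moves. -/
inductive ExecList (M : OPM A) (T : OPA A) :
    Config A T.Q → List (Move A T.Q) → Config A T.Q → Prop where
  | nil (c : Config A T.Q) : ExecList M T c [] c
  | cons {c c' c'' : Config A T.Q} {m : Move A T.Q} {ms : List (Move A T.Q)} :
      Exec M T c m c' → ExecList M T c' ms c'' → ExecList M T c (m :: ms) c''

/-- The weight of a move of a weighted OPA. -/
def moveWt [Semiring K] (W : WOPA A K) : Move A W.Q → K
  | .push q b r => W.wtpush (q, b, r)
  | .shift q b r => W.wtshift (q, b, r)
  | .pop q p r => W.wtpop (q, p, r)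

/-- The accepting runs of an OPA on `w`: an initial state, a sequence of moves from the
initial configuration (empty stack, whole input) to a final configuration
(empty stack, input read), and the final state reached. -/
def AccRuns (M : OPM A) (T : OPA A) (w : List A) : Set (T.Q × List (Move A T.Q) × T.Q) :=
  {ρ | ρ.1 ∈ T.I ∧ ρ.2.2 ∈ T.F ∧ ExecList M T ⟨[], ρ.1, w⟩ ρ.2.1 ⟨[], ρ.2.2, []⟩}

/-- The behavior `⟦W⟧(w)`: the sum over all accepting runs of `W` on `w` of the product
(in order) of the weights of the moves of the run. -/
noncomputable def behavior [Semiring K] (M : OPM A) (W : WOPA A K) (w : List A) : K :=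
  ∑ᶠ ρ ∈ AccRuns M W.toOPA w, (ρ.2.1.map (moveWt W)).prod

/-- A weighted OPA is restricted (an rwOPA) if all pop weights are `1`. -/
def Restricted [Semiring K] (W : WOPA A K) : Prop := ∀ t ∈ W.δpop, W.wtpop t = 1

/-- A series `S : (Σ,M)^+ → K` is regular if it is the behavior of some wOPA. -/
def Regular [Semiring K] (M : OPM A) (S : List A → K) : Prop :=
  ∃ W : WOPA A K, ∀ w ∈ OPWords M, S w = behavior M W w

/-- A series is strictly regular if it is the behavior of some restricted wOPA. -/
def StrictlyRegular [Semiring K] (M : OPM A) (S : List A → K) : Prop :=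
  ∃ W : WOPA A K, Restricted W ∧ ∀ w ∈ OPWords M, S w = behavior M W w

/-- Unweighted acceptance. -/
def Accepts (M : OPM A) (T : OPA A) (w : List A) : Prop :=
  ∃ qI ms qF, qI ∈ T.I ∧ qF ∈ T.F ∧ ExecList M T ⟨[], qI, w⟩ ms ⟨[], qF, []⟩

/-- A language `L ⊆ (Σ,M)^+` is an operator precedence language if it is the set of
compatible words accepted by some OPA. -/
def IsOPL (M : OPM A) (L : Set (List A)) : Prop :=
  ∃ T : OPA A, L = {w | w ∈ OPWords M ∧ Accepts M T w}

/-- The intersection `S ∩ L` of a series with a language. -/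
noncomputable def interSeries [Semiring K] (S : List A → K) (L : Set (List A))
    (w : List A) : K :=
  open Classical in if w ∈ L then S w else 0

/-- `h : Σ → Γ` is OPM-preserving: `a ⊙ b` iff `h(a) ⊙ h(b)` for every relation `⊙`. -/
def OPMPreserving (M : OPM A) (M' : OPM B) (h : A → B) : Prop :=
  ∀ a b : A, M.rel (some a) (some b) = M'.rel (some (h a)) (some (h b))

/-- The image series `h(S)(v) = ∑_{w ∈ (Σ,M)^+, h(w) = v} S(w)`. -/
noncomputable def mapSeries [Semiring K] (M : OPM A) (h : A → B) (S : List A → K)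
    (v : List B) : K :=
  ∑ᶠ w ∈ {w | w ∈ OPWords M ∧ w.map h = v}, S w

/-- The pullback OPM `h⁻¹(M)` along `h : Σ' → Σ`. -/
def pullOPM (M : OPM A) (h : B → A) : OPM B where
  rel o₁ o₂ := M.rel (o₁.map h) (o₂.map h)
  hash_lt b := M.hash_lt (h b)
  hash_gt b := M.hash_gt (h b)

/-- The Nivat class `N(Σ,M,K)`: series obtained from a one-state restricted wOPA over a
pulled-back OP alphabet, intersected with an OPL, followed by the projection. -/
def NivatClass [Semiring K] (M : OPM A) (S : List A → K) : Prop :=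
  ∃ (B : Type) (_ : Fintype B) (h : B → A) (W : WOPA B K) (L : Set (List B)),
    Restricted W ∧ (∃ q₀ : W.Q, ∀ q : W.Q, q = q₀) ∧ IsOPL (pullOPM M h) L ∧
    ∀ v ∈ OPWords M,
      S v = mapSeries (pullOPM M h) h (interSeries (behavior (pullOPM M h) W) L) v

/-- An OPL step function: a finite sum `∑ kᵢ · 1_{Lᵢ}` with the `Lᵢ` OPLs forming a
partition of `(Σ,M)^+`. -/
def IsOPLStep [Semiring K] (M : OPM A) (S : List A → K) : Prop :=
  ∃ (n : ℕ) (k : Fin n → K) (L : Fin n → Set (List A)),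
    (∀ i, IsOPL M (L i)) ∧ (∀ i j, i ≠ j → Disjoint (L i) (L j)) ∧
    (⋃ i, L i) = OPWords M ∧ ∀ i, ∀ w ∈ L i, S w = k i



/-!  ### Weighted MSO logic for OPLs -/

/-- Variables: `Sum.inl x` is a first-order variable, `Sum.inr X` a second-order one. -/
abbrev Var : Type := ℕ ⊕ ℕ

/-- Boolean MSO formulas over the OP alphabet `(Σ, M)`; labels range over `Σ ∪ {#}`
(`none` encodes `#`). -/
inductive BFormula (A : Type) where
  | lab (a : Option A) (x : ℕ)
  | le (x y : ℕ)
  | chainR (x y : ℕ)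
  | mem (x X : ℕ)
  | not (β : BFormula A)
  | or (β₁ β₂ : BFormula A)
  | exFO (x : ℕ) (β : BFormula A)
  | exSO (X : ℕ) (β : BFormula A)

/-- Weighted MSO formulas over `(Σ, M)` and the semiring `K`. -/
inductive WFormula (A K : Type) where
  | atom (β : BFormula A)
  | const (k : K)
  | plus (φ ψ : WFormula A K)
  | times (φ ψ : WFormula A K)
  | sumFO (x : ℕ) (φ : WFormula A K)
  | sumSO (X : ℕ) (φ : WFormula A K)
  | prodFO (x : ℕ) (φ : WFormula A K)

/-- Free variables of a boolean formula. -/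
def BFormula.free {A : Type} : BFormula A → Finset Var
  | .lab _ x => {Sum.inl x}
  | .le x y => {Sum.inl x, Sum.inl y}
  | .chainR x y => {Sum.inl x, Sum.inl y}
  | .mem x X => {Sum.inl x, Sum.inr X}
  | .not β => β.free
  | .or β₁ β₂ => β₁.free ∪ β₂.free
  | .exFO x β => β.free \ {Sum.inl x}
  | .exSO X β => β.free \ {Sum.inr X}

/-- Free variables of a weighted formula. -/
def WFormula.free {A K : Type} : WFormula A K → Finset Var
  | .atom β => β.free
  | .const _ => ∅
  | .plus φ ψ => φ.free ∪ ψ.free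
  | .times φ ψ => φ.free ∪ ψ.free
  | .sumFO x φ => φ.free \ {Sum.inl x}
  | .sumSO X φ => φ.free \ {Sum.inr X}
  | .prodFO x φ => φ.free \ {Sum.inl x}

/-- Satisfaction of a boolean formula on `w` under a first-order assignment `σ`
(into positions `1, ..., |w|`) and a second-order assignment `τ`. -/
def BSat (M : OPM A) (w : List A) : (ℕ → ℕ) → (ℕ → Set ℕ) → BFormula A → Prop
  | σ, _, .lab a x => letterAt w (σ x) = a
  | σ, _, .le x y => σ x ≤ σ y
  | σ, _, .chainR x y => Chain M (letterAt w) (σ x) (σ y)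
  | σ, τ, .mem x X => σ x ∈ τ X
  | σ, τ, .not β => ¬ BSat M w σ τ β
  | σ, τ, .or β₁ β₂ => BSat M w σ τ β₁ ∨ BSat M w σ τ β₂
  | σ, τ, .exFO x β => ∃ i ∈ Finset.Icc 1 w.length, BSat M w (Function.update σ x i) τ β
  | σ, τ, .exSO X β => ∃ I ⊆ Set.Icc 1 w.length, BSat M w σ (Function.update τ X I) β

/-- The (assignment-based) semantics of a weighted formula: sums range over the
positions `1, ..., |w|` (resp. their subsets) and the product quantifier multiplies
in increasing order of positions. -/
noncomputable def sem [Semiring K] (M : OPM A) (w : List A) :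
    (ℕ → ℕ) → (ℕ → Set ℕ) → WFormula A K → K
  | σ, τ, .atom β => open Classical in if BSat M w σ τ β then 1 else 0
  | _, _, .const k => k
  | σ, τ, .plus φ ψ => sem M w σ τ φ + sem M w σ τ ψ
  | σ, τ, .times φ ψ => sem M w σ τ φ * sem M w σ τ ψ
  | σ, τ, .sumFO x φ => ∑ i ∈ Finset.Icc 1 w.length, sem M w (Function.update σ x i) τ φ
  | σ, τ, .sumSO X φ => ∑ I ∈ (Finset.Icc 1 w.length).powerset,
      sem M w σ (Function.update τ X (↑I : Set ℕ)) φ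
  | σ, τ, .prodFO x φ =>
      ((List.range w.length).map fun i => sem M w (Function.update σ x (i + 1)) τ φ).prod

/-- The extended alphabet `Σ_V = Σ × {0,1}^V`. -/
abbrev AV (A : Type) (V : Finset Var) : Type := A × ({v // v ∈ V} → Bool)

/-- The OPM `M_V` on `Σ_V`, relating extended letters exactly as `M` relates their
first components. -/
def extOPM (M : OPM A) (V : Finset Var) : OPM (AV A V) where
  rel o₁ o₂ := M.rel (o₁.map Prod.fst) (o₂.map Prod.fst)
  hash_lt p := M.hash_lt p.1
  hash_gt p := M.hash_gt p.1

/-- The bit of the first-order variable `x` is set at position `i` of `u`. -/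
def bitFO (V : Finset Var) (u : List (AV A V)) (x : ℕ) (i : ℕ) : Prop :=
  ∃ h : Sum.inl x ∈ V, ∃ p ∈ u[i - 1]?, 1 ≤ i ∧ p.2 ⟨Sum.inl x, h⟩ = true

/-- The bit of the second-order variable `X` is set at position `i` of `u`. -/
def bitSO (V : Finset Var) (u : List (AV A V)) (X : ℕ) (i : ℕ) : Prop :=
  ∃ h : Sum.inr X ∈ V, ∃ p ∈ u[i - 1]?, 1 ≤ i ∧ p.2 ⟨Sum.inr X, h⟩ = true

/-- A word over `Σ_V` is valid if every first-order variable of `V` is assigned to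
exactly one position. -/
def validEnc (V : Finset Var) (u : List (AV A V)) : Prop :=
  ∀ x : ℕ, Sum.inl x ∈ V → ∃! i, bitFO V u x i

/-- The first-order assignment encoded in a word over `Σ_V`. -/
noncomputable def decFO (V : Finset Var) (u : List (AV A V)) : ℕ → ℕ :=
  fun x => sInf {i | bitFO V u x i}

/-- The second-order assignment encoded in a word over `Σ_V`. -/
def decSO (V : Finset Var) (u : List (AV A V)) : ℕ → Set ℕ :=
  fun X => {i | bitSO V u X i}

/-- The semantics `⟦φ⟧_V : (Σ_V, M_V)^+ → K`: `0` on non-valid words, and otherwise the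
value of `φ` on the decoded word and assignments. -/
noncomputable def semV [Semiring K] (M : OPM A) (φ : WFormula A K) (V : Finset Var)
    (u : List (AV A V)) : K :=
  open Classical in
  if validEnc V u then sem M (u.map Prod.fst) (decFO V u) (decSO V u) φ else 0

/-- Restriction `(w, σ) ↦ (w, σ↾W)` of encoded words from `V`-encodings to
`W`-encodings, for `W ⊆ V`. -/
def restrictWord {V W : Finset Var} (h : W ⊆ V) (u : List (AV A V)) : List (AV A W) :=
  u.map fun p => (p.1, fun v => p.2 ⟨v.1, h v.2⟩)

/-- Semantics of a sentence, as a series over `(Σ, M)^+`. -/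
noncomputable def semClosed [Semiring K] (M : OPM A) (φ : WFormula A K)
    (w : List A) : K :=
  sem M w (fun _ => 1) (fun _ => ∅) φ

/-- Almost boolean formulas: built from constants and boolean formulas by `⊕` and `⊗`. -/
inductive AlmostBoolean {A K : Type} : WFormula A K → Prop where
  | atom (β : BFormula A) : AlmostBoolean (.atom β)
  | const (k : K) : AlmostBoolean (.const k)
  | plus {φ ψ : WFormula A K} :
      AlmostBoolean φ → AlmostBoolean ψ → AlmostBoolean (.plus φ ψ)
  | times {φ ψ : WFormula A K} :
      AlmostBoolean φ → AlmostBoolean ψ → AlmostBoolean (.times φ ψ)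

/-- The constants of `K` occurring in a weighted formula. -/
def consts {A K : Type} : WFormula A K → Set K
  | .atom _ => ∅
  | .const k => {k}
  | .plus φ ψ => consts φ ∪ consts ψ
  | .times φ ψ => consts φ ∪ consts ψ
  | .sumFO _ φ => consts φ
  | .sumSO _ φ => consts φ
  | .prodFO _ φ => consts φ

/-- `⊗`-restricted formulas: in every subformula `ψ ⊗ θ`, either `ψ` is almost boolean
or the constants of `ψ` and `θ` commute elementwise. -/
def TimesRestricted [Semiring K] : WFormula A K → Prop
  | .atom _ => True
  | .const _ => True
  | .plus φ ψ => TimesRestricted φ ∧ TimesRestricted ψ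
  | .times φ ψ => TimesRestricted φ ∧ TimesRestricted ψ ∧
      (AlmostBoolean φ ∨ ∀ k ∈ consts φ, ∀ k' ∈ consts ψ, k * k' = k' * k)
  | .sumFO _ φ => TimesRestricted φ
  | .sumSO _ φ => TimesRestricted φ
  | .prodFO _ φ => TimesRestricted φ

/-- `∏`-restricted formulas: in every subformula `∏ₓ ψ`, the formula `ψ` is
almost boolean. -/
def ProdRestricted {A K : Type} : WFormula A K → Prop
  | .atom _ => True
  | .const _ => True
  | .plus φ ψ => ProdRestricted φ ∧ ProdRestricted ψ
  | .times φ ψ => ProdRestricted φ ∧ ProdRestricted ψ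
  | .sumFO _ φ => ProdRestricted φ
  | .sumSO _ φ => ProdRestricted φ
  | .prodFO _ φ => ProdRestricted φ ∧ AlmostBoolean φ

/-- Restricted formulas: both `⊗`-restricted and `∏`-restricted. -/
def RestrictedFormula [Semiring K] (φ : WFormula A K) : Prop :=
  TimesRestricted φ ∧ ProdRestricted φ

/-- The subformula relation on weighted formulas. -/
inductive Subf {A K : Type} : WFormula A K → WFormula A K → Prop where
  | refl (φ : WFormula A K) : Subf φ φ
  | plusL {χ φ ψ : WFormula A K} : Subf χ φ → Subf χ (.plus φ ψ)
  | plusR {χ φ ψ : WFormula A K} : Subf χ ψ → Subf χ (.plus φ ψ)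
  | timesL {χ φ ψ : WFormula A K} : Subf χ φ → Subf χ (.times φ ψ)
  | timesR {χ φ ψ : WFormula A K} : Subf χ ψ → Subf χ (.times φ ψ)
  | sumFO {χ φ : WFormula A K} {x : ℕ} : Subf χ φ → Subf χ (.sumFO x φ)
  | sumSO {χ φ : WFormula A K} {X : ℕ} : Subf χ φ → Subf χ (.sumSO X φ)
  | prodFO {χ φ : WFormula A K} {x : ℕ} : Subf χ φ → Subf χ (.prodFO x φ)

/-!
The first claim is the free-variable lemma: the semantics of `φ` reads only the bits of
`free(φ)`, and restricting a valid encoding to `free(φ)` keeps the decoded assignment on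
those variables.

For regularity, a wOPA is composed with a deterministic letter-to-letter transducer whose
state is carried along in the automaton states. Since the transducer does not change the
underlying `Σ`-letters, it respects the precedence relations, so the accepting runs of the
product on `w` are in bijection with the accepting runs of the original automaton on the
transduced word, with the same weights; pop weights are not changed, so restricted automata
stay restricted. To pass from `⟦φ⟧` to `⟦φ⟧_V`, the transducer drops the extra bits and counts,
for every variable and saturating at `2`, the positions carrying its bit, accepting exactly the
valid encodings. Conversely, it places all the extra variables at the first position, which
turns valid encodings into valid encodings.
-/

section Transducer

variable {P : Type}

def transduce (step : P → A → P) (out : P → A → B) : P → List A → List B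
  | _, [] => []
  | p, a :: w => out p a :: transduce step out (step p a) w

variable {step : P → A → P} {out : P → A → B}

theorem transduce_eq_map_of_out_eq {f : A → B} (h : ∀ p a, out p a = f a) :
    ∀ (p : P) (w : List A), transduce step out p w = w.map f
  | _, [] => rfl
  | p, a :: w => by rw [transduce, h, transduce_eq_map_of_out_eq h, List.map_cons]

theorem transduce_eq_map_of_step_eq {p : P} (h : ∀ p' a, step p' a = p) :
    ∀ w : List A, transduce step out p w = w.map (out p)
  | [] => rfl
  | a :: w => by rw [transduce, h, transduce_eq_map_of_step_eq h, List.map_cons]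

end Transducer

def OPMPreservingOutput {P : Type} (M : OPM A) (M' : OPM B) (out : P → A → B) : Prop :=
  ∀ p q a b, M.rel (some a) (some b) = M'.rel (some (out p a)) (some (out q b))

section MealyProduct

variable {P : Type} (step : P → A → P) (out : P → A → B) (p₀ : P) (Fd : Set P)

/-- The product of `T` with the Mealy machine `(step, out, p₀, Fd)`: it reads `w` and
simulates `T` on the transduced word, accepting only if the Mealy machine ends in `Fd`. -/
abbrev OPA.mealyProd [Fintype P] (T : OPA B) : OPA A where
  Q := T.Q × P
  fin := letI := T.fin; inferInstance
  I := {s | s.1 ∈ T.I ∧ s.2 = p₀}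
  F := {s | s.1 ∈ T.F ∧ s.2 ∈ Fd}
  δpush := {t | (t.1.1, out t.1.2 t.2.1, t.2.2.1) ∈ T.δpush ∧ t.2.2.2 = step t.1.2 t.2.1}
  δshift := {t | (t.1.1, out t.1.2 t.2.1, t.2.2.1) ∈ T.δshift ∧ t.2.2.2 = step t.1.2 t.2.1}
  δpop := {t | (t.1.1, t.2.1.1, t.2.2.1) ∈ T.δpop ∧ t.2.2.2 = t.1.2}

abbrev WOPA.mealyProd [Fintype P] [Semiring K] (W : WOPA B K) : WOPA A K where
  toOPA := W.toOPA.mealyProd step out p₀ Fd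
  wtpush t := W.wtpush (t.1.1, out t.1.2 t.2.1, t.2.2.1)
  wtshift t := W.wtshift (t.1.1, out t.1.2 t.2.1, t.2.2.1)
  wtpop t := W.wtpop (t.1.1, t.2.1.1, t.2.2.1)

theorem Restricted.mealyProd [Fintype P] [Semiring K] {W : WOPA B K} (hW : Restricted W) :
    Restricted (W.mealyProd step out p₀ Fd) :=
  fun _ ht => hW _ ht.1

def Move.proj {Q : Type} : Move A (Q × P) → Move B Q
  | .push s a u => .push s.1 (out s.2 a) u.1
  | .shift s a u => .shift s.1 (out s.2 a) u.1
  | .pop s t u => .pop s.1 t.1 u.1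

theorem moveWt_mealyProd [Fintype P] [Semiring K] (W : WOPA B K) (m : Move A (W.Q × P)) :
    moveWt (W.mealyProd step out p₀ Fd) m = moveWt W (m.proj out) := by
  cases m <;> rfl

/-- The Mealy state in which the letter of a stack entry was read is not recorded in the
product's stack, because a shift keeps the state of the entry it replaces. -/
def StackRel {Q : Type} (e' : A × (Q × P)) (e : B × Q) : Prop :=
  e.2 = e'.2.1 ∧ ∃ p, e.1 = out p e'.1

def ConfigRel {Q : Type} (c' : Config A (Q × P)) (c : Config B Q) : Prop :=
  c.state = c'.state.1 ∧ c.input = transduce step out c'.state.2 c'.input ∧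
    List.Forall₂ (StackRel out) c'.stack c.stack

variable {step out p₀ Fd} {M : OPM A} {M' : OPM B}

theorem OPMPreservingOutput.rel_topSym (hout : OPMPreservingOutput M M' out) {Q : Type}
    {st' : List (A × (Q × P))} {st : List (B × Q)} (hst : List.Forall₂ (StackRel out) st' st)
    (p : P) (b : A) : M.rel (topSym st') (some b) = M'.rel (topSym st) (some (out p b)) := by
  cases hst with
  | nil => simp [topSym, M.hash_lt, M'.hash_lt]
  | cons h _ =>
    obtain ⟨-, p', hp'⟩ := h
    simp only [topSym, List.head?_cons, Option.map_some, hp']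
    exact hout p' p _ b

theorem OPMPreservingOutput.rel_head (hout : OPMPreservingOutput M M' out) (a : A) (p' p : P)
    (x : List A) :
    M.rel (some a) x.head? = M'.rel (some (out p' a)) (transduce step out p x).head? := by
  cases x with
  | nil => simp [transduce, M.hash_gt, M'.hash_gt]
  | cons c x => exact hout p' p a c

variable {T : OPA B}

theorem ConfigRel.right_eq_final {t : T.Q × P} {d : Config B T.Q}
    (h : ConfigRel step out ⟨[], t, []⟩ d) : d = ⟨[], t.1, []⟩ := by
  obtain ⟨_, _, _⟩ := d
  obtain ⟨rfl, rfl, h⟩ := h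
  cases h
  rfl

theorem ConfigRel.left_eq_final {q : T.Q} {d' : Config A (T.Q × P)}
    (h : ConfigRel step out d' ⟨[], q, []⟩) : d' = ⟨[], (q, d'.state.2), []⟩ := by
  obtain ⟨_, ⟨_, _⟩, _ | _⟩ := d'
  · obtain ⟨rfl, -, h⟩ := h
    cases h
    rfl
  · cases h.2.1

variable [Fintype P]

theorem Exec.exists_proj_of_mealyProd (hout : OPMPreservingOutput M M' out)
    {c' d' : Config A (T.mealyProd step out p₀ Fd).Q} {m : Move A (T.Q × P)}
    (h : Exec M (T.mealyProd step out p₀ Fd) c' m d') {c : Config B T.Q}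
    (hc : ConfigRel step out c' c) :
    ∃ d, Exec M' T c (m.proj out) d ∧ ConfigRel step out d' d := by
  obtain ⟨cst, cq, cx⟩ := c
  obtain ⟨rfl, rfl, hst⟩ := hc
  cases h with
  | @push _ s r b x hrel hmem =>
    have hrel' : M'.rel (topSym cst) (some (out s.2 b)) = some .lt := by
      rwa [← hout.rel_topSym hst]
    exact ⟨_, Exec.push hrel' hmem.1, rfl, by rw [hmem.2], .cons ⟨rfl, s.2, rfl⟩ hst⟩
  | @shift _ _ s r a b x hrel hmem =>
    obtain _ | ⟨⟨he, p', hp'⟩, hst⟩ := hst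
    rename_i e _
    have hrel' : M'.rel (some e.1) (some (out s.2 b)) = some .eq := by
      rwa [hp', ← hout p' s.2 a b]
    exact ⟨_, Exec.shift hrel' hmem.1, rfl, by rw [hmem.2], .cons ⟨he, s.2, rfl⟩ hst⟩
  | @pop _ _ s r a x hrel hmem =>
    obtain _ | ⟨⟨he, p', hp'⟩, hst⟩ := hst
    rename_i e _
    obtain ⟨b, _⟩ := e
    obtain rfl : _ = _ := he
    obtain rfl : b = out p' a := hp'
    have hrel' : M'.rel (some (out p' a)) (transduce step out s.2 x).head? = some .gt := by
      rwa [← hout.rel_head a p' s.2 x]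
    refine ⟨⟨_, r.1, _⟩, Exec.pop hrel' hmem.1, rfl, ?_, hst⟩
    rw [hmem.2]

theorem Exec.exists_mealyProd_lift (hout : OPMPreservingOutput M M' out)
    {c d : Config B T.Q} {m : Move B T.Q} (h : Exec M' T c m d)
    {c' : Config A (T.mealyProd step out p₀ Fd).Q} (hc : ConfigRel step out c' c) :
    ∃ m' d', Exec M (T.mealyProd step out p₀ Fd) c' m' d' ∧ m'.proj out = m ∧
      ConfigRel step out d' d := by
  obtain ⟨st', s, x'⟩ := c'
  cases h with
  | @push _ _ r b x hrel hmem =>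
    obtain ⟨rfl, hx, hst⟩ := hc
    obtain _ | ⟨a, x'⟩ := x'
    · cases hx
    obtain ⟨rfl, rfl⟩ : b = out s.2 a ∧ x = transduce step out (step s.2 a) x' :=
      List.cons.inj hx
    have hrel' : M.rel (topSym st') (some a) = some .lt := by rwa [hout.rel_topSym hst]
    exact ⟨.push s a (r, step s.2 a), _, Exec.push hrel' ⟨hmem, rfl⟩, rfl, rfl, rfl,
      .cons ⟨rfl, s.2, rfl⟩ hst⟩
  | @shift _ _ _ r b' b x hrel hmem =>
    obtain ⟨rfl, hx, hst⟩ := hc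
    obtain _ | ⟨⟨he, p', hp'⟩, hst⟩ := hst
    rename_i e _
    obtain _ | ⟨a, x'⟩ := x'
    · cases hx
    obtain ⟨rfl, rfl⟩ : b = out s.2 a ∧ x = transduce step out (step s.2 a) x' :=
      List.cons.inj hx
    have hrel' : M.rel (some e.1) (some a) = some .eq := by rwa [hout p' s.2, ← hp']
    exact ⟨.shift s a (r, step s.2 a), _, Exec.shift hrel' ⟨hmem, rfl⟩, rfl, rfl, rfl,
      .cons ⟨he, s.2, rfl⟩ hst⟩
  | @pop _ _ _ r b x hrel hmem =>
    obtain ⟨rfl, hx, hst⟩ := hc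
    obtain _ | ⟨⟨he, p', hp'⟩, hst⟩ := hst
    rename_i e _
    obtain ⟨a, t⟩ := e
    obtain rfl : _ = t.1 := he
    obtain rfl : b = out p' a := hp'
    have hrel' : M.rel (some a) x'.head? = some .gt := by rwa [hout.rel_head a p' s.2, ← hx]
    exact ⟨.pop s t (r, s.2), _, Exec.pop hrel' ⟨hmem, rfl⟩, rfl, rfl, hx, hst⟩

theorem ExecList.exists_proj_of_mealyProd (hout : OPMPreservingOutput M M' out)
    {c' d' : Config A (T.mealyProd step out p₀ Fd).Q} {ms : List (Move A (T.Q × P))}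
    (h : ExecList M (T.mealyProd step out p₀ Fd) c' ms d') {c : Config B T.Q}
    (hc : ConfigRel step out c' c) :
    ∃ d, ExecList M' T c (ms.map (Move.proj out)) d ∧ ConfigRel step out d' d := by
  induction h generalizing c with
  | nil => exact ⟨c, .nil c, hc⟩
  | cons h₁ _ ih =>
    obtain ⟨d₁, hd₁, hc₁⟩ := h₁.exists_proj_of_mealyProd hout hc
    obtain ⟨d, hd, hc⟩ := ih hc₁
    exact ⟨d, .cons hd₁ hd, hc⟩

theorem ExecList.exists_mealyProd_lift (hout : OPMPreservingOutput M M' out)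
    {c d : Config B T.Q} {ms : List (Move B T.Q)} (h : ExecList M' T c ms d)
    {c' : Config A (T.mealyProd step out p₀ Fd).Q} (hc : ConfigRel step out c' c) :
    ∃ ms' d', ExecList M (T.mealyProd step out p₀ Fd) c' ms' d' ∧
      ms'.map (Move.proj out) = ms ∧ ConfigRel step out d' d := by
  induction h generalizing c' with
  | nil => exact ⟨[], c', .nil c', rfl, hc⟩
  | cons h₁ _ ih =>
    obtain ⟨m', d₁', hd₁', rfl, hc₁⟩ :=
      h₁.exists_mealyProd_lift (p₀ := p₀) (Fd := Fd) hout hc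
    obtain ⟨ms', d', hd', rfl, hc'⟩ := ih hc₁
    exact ⟨m' :: ms', d', .cons hd₁' hd', rfl, hc'⟩

theorem Exec.eq_of_proj_eq {c d₁ d₂ : Config A (T.mealyProd step out p₀ Fd).Q}
    {m₁ m₂ : Move A (T.Q × P)} (h₁ : Exec M (T.mealyProd step out p₀ Fd) c m₁ d₁)
    (h₂ : Exec M (T.mealyProd step out p₀ Fd) c m₂ d₂)
    (hm : m₁.proj out = m₂.proj out) :
    m₁ = m₂ ∧ d₁ = d₂ := by
  cases h₁ <;> cases h₂ <;> simp_all [Move.proj, Prod.ext_iff]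

theorem ExecList.eq_of_proj_eq {c d₁ d₂ : Config A (T.mealyProd step out p₀ Fd).Q}
    {ms₁ ms₂ : List (Move A (T.Q × P))}
    (h₁ : ExecList M (T.mealyProd step out p₀ Fd) c ms₁ d₁)
    (h₂ : ExecList M (T.mealyProd step out p₀ Fd) c ms₂ d₂)
    (hms : ms₁.map (Move.proj out) = ms₂.map (Move.proj out)) :
    ms₁ = ms₂ ∧ d₁ = d₂ := by
  induction h₁ generalizing ms₂ with
  | nil => cases h₂ with
    | nil => exact ⟨rfl, rfl⟩
    | cons => cases hms
  | cons e₁ _ ih => cases h₂ with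
    | nil => cases hms
    | cons e₂ h₂ =>
      rw [List.map_cons, List.map_cons, List.cons.injEq] at hms
      obtain ⟨hm, hms⟩ := hms
      obtain ⟨rfl, rfl⟩ := e₁.eq_of_proj_eq e₂ hm
      obtain ⟨rfl, rfl⟩ := ih h₂ hms
      exact ⟨rfl, rfl⟩

theorem Exec.foldl_input_eq {c d : Config A (T.mealyProd step out p₀ Fd).Q}
    {m : Move A (T.Q × P)}
    (h : Exec M (T.mealyProd step out p₀ Fd) c m d) :
    d.input.foldl step d.state.2 = c.input.foldl step c.state.2 := by
  cases h <;> simp_all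

theorem ExecList.foldl_input_eq {c d : Config A (T.mealyProd step out p₀ Fd).Q}
    {ms : List (Move A (T.Q × P))} (h : ExecList M (T.mealyProd step out p₀ Fd) c ms d) :
    d.input.foldl step d.state.2 = c.input.foldl step c.state.2 := by
  induction h with
  | nil => rfl
  | cons h₁ _ ih => rw [ih, h₁.foldl_input_eq]

theorem ExecList.state_eq_foldl {s t : T.Q × P} {w : List A} {ms : List (Move A (T.Q × P))}
    (h : ExecList M (T.mealyProd step out p₀ Fd) ⟨[], s, w⟩ ms ⟨[], t, []⟩) :
    t.2 = w.foldl step s.2 :=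
  h.foldl_input_eq

variable (out) in
def runProj {Q : Type} (ρ : (Q × P) × List (Move A (Q × P)) × (Q × P)) :
    Q × List (Move B Q) × Q :=
  (ρ.1.1, ρ.2.1.map (Move.proj out), ρ.2.2.1)

theorem mapsTo_runProj_accRuns (hout : OPMPreservingOutput M M' out) (w : List A) :
    Set.MapsTo (runProj out) (AccRuns M (T.mealyProd step out p₀ Fd) w)
      (AccRuns M' T (transduce step out p₀ w)) := by
  rintro ⟨s, ms, t⟩ ⟨⟨hs, hs₀⟩, ⟨ht, -⟩, hrun⟩
  obtain ⟨d, hd, hc⟩ := hrun.exists_proj_of_mealyProd hout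
    (c := ⟨[], s.1, transduce step out p₀ w⟩) ⟨rfl, by rw [← hs₀], .nil⟩
  exact ⟨hs, ht, hc.right_eq_final ▸ hd⟩

theorem injOn_runProj_accRuns (w : List A) :
    Set.InjOn (runProj out) (AccRuns M (T.mealyProd step out p₀ Fd) w) := by
  rintro ⟨s₁, ms₁, t₁⟩ ⟨⟨-, hs₁⟩, -, hrun₁⟩ ⟨s₂, ms₂, t₂⟩ ⟨⟨-, hs₂⟩, -, hrun₂⟩ h
  simp only [runProj, Prod.mk.injEq] at h
  obtain ⟨hs, hms, -⟩ := h
  obtain rfl : s₁ = s₂ := Prod.ext hs (hs₁.trans hs₂.symm)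
  obtain ⟨rfl, h⟩ := hrun₁.eq_of_proj_eq hrun₂ hms
  cases h
  rfl

theorem surjOn_runProj_accRuns (hout : OPMPreservingOutput M M' out) {w : List A}
    (hw : w.foldl step p₀ ∈ Fd) :
    Set.SurjOn (runProj out) (AccRuns M (T.mealyProd step out p₀ Fd) w)
      (AccRuns M' T (transduce step out p₀ w)) := by
  rintro ⟨q, ms, t⟩ ⟨hq, ht, hrun⟩
  obtain ⟨ms', d', hrun', rfl, hc⟩ :=
    hrun.exists_mealyProd_lift (p₀ := p₀) (Fd := Fd) hout (c' := ⟨[], (q, p₀), w⟩)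
      ⟨rfl, rfl, .nil⟩
  rw [hc.left_eq_final] at hrun'
  have hρ : ((q, p₀), ms', (t, d'.state.2)) ∈ AccRuns M (T.mealyProd step out p₀ Fd) w :=
    ⟨⟨hq, rfl⟩, ⟨ht, hrun'.state_eq_foldl ▸ hw⟩, hrun'⟩
  exact ⟨_, hρ, rfl⟩

theorem accRuns_mealyProd_eq_empty {w : List A} (hw : w.foldl step p₀ ∉ Fd) :
    AccRuns M (T.mealyProd step out p₀ Fd) w = ∅ := by
  refine Set.eq_empty_of_forall_notMem ?_
  rintro ⟨s, ms, t⟩ ⟨⟨-, hs⟩, ⟨-, ht⟩, hrun⟩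
  rw [hrun.state_eq_foldl, hs] at ht
  exact hw ht

theorem behavior_mealyProd [Semiring K] [DecidablePred (· ∈ Fd)]
    (hout : OPMPreservingOutput M M' out) (W : WOPA B K) (w : List A) :
    behavior M (W.mealyProd step out p₀ Fd) w =
      if w.foldl step p₀ ∈ Fd then behavior M' W (transduce step out p₀ w) else 0 := by
  split_ifs with hw
  · refine finsum_mem_eq_of_bijOn (runProj out) ⟨mapsTo_runProj_accRuns hout w,
      injOn_runProj_accRuns w, surjOn_runProj_accRuns hout hw⟩ fun ρ _ => ?_
    simp only [runProj, List.map_map]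
    congr 2
    exact funext (moveWt_mealyProd step out p₀ Fd W)
  · rw [behavior, accRuns_mealyProd_eq_empty hw, finsum_mem_empty]

theorem eq_behavior_mealyProd [Semiring K] [DecidablePred (· ∈ Fd)]
    (hout : OPMPreservingOutput M M' out) {S : List A → K} {S' : List B → K} {W : WOPA B K}
    (hW : ∀ v ∈ OPWords M', S' v = behavior M' W v)
    (hmem : ∀ w ∈ OPWords M, transduce step out p₀ w ∈ OPWords M')
    (hS : ∀ w ∈ OPWords M,
      S w = if w.foldl step p₀ ∈ Fd then S' (transduce step out p₀ w) else 0)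
    (w : List A) (hw : w ∈ OPWords M) : S w = behavior M (W.mealyProd step out p₀ Fd) w := by
  rw [hS w hw, behavior_mealyProd hout, hW _ (hmem w hw)]

theorem Regular.of_transduce [Semiring K] [DecidablePred (· ∈ Fd)]
    {S : List A → K} {S' : List B → K} (hS' : Regular M' S')
    (hmem : ∀ w ∈ OPWords M, transduce step out p₀ w ∈ OPWords M')
    (hS : ∀ w ∈ OPWords M,
      S w = if w.foldl step p₀ ∈ Fd then S' (transduce step out p₀ w) else 0)
    (hout : OPMPreservingOutput M M' out) : Regular M S :=
  let ⟨W, hW⟩ := hS'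
  ⟨W.mealyProd step out p₀ Fd, eq_behavior_mealyProd hout hW hmem hS⟩

theorem StrictlyRegular.of_transduce [Semiring K] [DecidablePred (· ∈ Fd)]
    {S : List A → K} {S' : List B → K} (hS' : StrictlyRegular M' S')
    (hmem : ∀ w ∈ OPWords M, transduce step out p₀ w ∈ OPWords M')
    (hS : ∀ w ∈ OPWords M,
      S w = if w.foldl step p₀ ∈ Fd then S' (transduce step out p₀ w) else 0)
    (hout : OPMPreservingOutput M M' out) : StrictlyRegular M S :=
  let ⟨W, hres, hW⟩ := hS'
  ⟨W.mealyProd step out p₀ Fd, hres.mealyProd step out p₀ Fd,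
    eq_behavior_mealyProd hout hW hmem hS⟩

end MealyProduct

section FreeVariables

def AgreeOn (S : Finset Var) (σ σ' : ℕ → ℕ) (τ τ' : ℕ → Set ℕ) : Prop :=
  (∀ x, Sum.inl x ∈ S → σ x = σ' x) ∧ ∀ X, Sum.inr X ∈ S → τ X = τ' X

variable {S T : Finset Var} {σ σ' : ℕ → ℕ} {τ τ' : ℕ → Set ℕ}

theorem AgreeOn.mono (h : AgreeOn T σ σ' τ τ') (hST : S ⊆ T) : AgreeOn S σ σ' τ τ' :=
  ⟨fun x hx => h.1 x (hST hx), fun X hX => h.2 X (hST hX)⟩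

theorem AgreeOn.update_fo {x : ℕ} (h : AgreeOn (S \ {Sum.inl x}) σ σ' τ τ') (i : ℕ) :
    AgreeOn S (Function.update σ x i) (Function.update σ' x i) τ τ' := by
  refine ⟨fun y hy => ?_, fun Y hY => h.2 Y (by simpa using hY)⟩
  rcases eq_or_ne y x with rfl | hne
  · simp
  · simpa [hne] using h.1 y (by simpa [hne] using hy)

theorem AgreeOn.update_so {X : ℕ} (h : AgreeOn (S \ {Sum.inr X}) σ σ' τ τ') (I : Set ℕ) :
    AgreeOn S σ σ' (Function.update τ X I) (Function.update τ' X I) := by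
  refine ⟨fun y hy => h.1 y (by simpa using hy), fun Y hY => ?_⟩
  rcases eq_or_ne Y X with rfl | hne
  · simp
  · simpa [hne] using h.2 Y (by simpa [hne] using hY)

theorem BSat.congr_agreeOn (M : OPM A) (w : List A) (β : BFormula A)
    (h : AgreeOn β.free σ σ' τ τ') : BSat M w σ τ β ↔ BSat M w σ' τ' β := by
  induction β generalizing σ σ' τ τ' with
  | lab | le | chainR | mem => simp_all [AgreeOn, BSat, BFormula.free]
  | not β ih => exact not_congr (ih h)
  | or β₁ β₂ ih₁ ih₂ =>
    exact or_congr (ih₁ (h.mono Finset.subset_union_left))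
      (ih₂ (h.mono Finset.subset_union_right))
  | exFO x β ih => exact exists_congr fun i => and_congr_right fun _ => ih (h.update_fo i)
  | exSO X β ih => exact exists_congr fun I => and_congr_right fun _ => ih (h.update_so I)

theorem sem_congr_agreeOn [Semiring K] (M : OPM A) (w : List A) (φ : WFormula A K)
    (h : AgreeOn φ.free σ σ' τ τ') : sem M w σ τ φ = sem M w σ' τ' φ := by
  induction φ generalizing σ σ' τ τ' with
  | atom β => classical exact if_congr (BSat.congr_agreeOn M w β h) rfl rfl
  | const => rfl
  | plus φ ψ ihφ ihψ | times φ ψ ihφ ihψ =>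
    simp only [sem, ihφ (h.mono Finset.subset_union_left), ihψ (h.mono Finset.subset_union_right)]
  | sumFO x φ ih => exact Finset.sum_congr rfl fun i _ => ih (h.update_fo i)
  | sumSO X φ ih => exact Finset.sum_congr rfl fun I _ => ih (h.update_so I)
  | prodFO x φ ih => simp only [sem, ih (h.update_fo _)]

end FreeVariables

section Encoding

variable {V W : Finset Var}

theorem restrictWord_map_fst (h : W ⊆ V) (u : List (AV A V)) :
    (restrictWord h u).map Prod.fst = u.map Prod.fst := by
  simp [restrictWord, Function.comp_def]

theorem bitFO_restrictWord (h : W ⊆ V) (u : List (AV A V)) {x : ℕ} (hx : Sum.inl x ∈ W)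
    (i : ℕ) : bitFO W (restrictWord h u) x i ↔ bitFO V u x i := by
  simp [bitFO, restrictWord, hx, h hx]

theorem bitSO_restrictWord (h : W ⊆ V) (u : List (AV A V)) {X : ℕ} (hX : Sum.inr X ∈ W)
    (i : ℕ) : bitSO W (restrictWord h u) X i ↔ bitSO V u X i := by
  simp [bitSO, restrictWord, hX, h hX]

theorem validEnc.restrictWord (h : W ⊆ V) {u : List (AV A V)} (hu : validEnc V u) :
    validEnc W (restrictWord h u) := by
  intro x hx
  simpa only [bitFO_restrictWord h u hx] using hu x (h hx)

theorem agreeOn_dec_restrictWord (h : W ⊆ V) (u : List (AV A V)) :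
    AgreeOn W (decFO V u) (decFO W (restrictWord h u)) (decSO V u) (decSO W (restrictWord h u)) :=
  ⟨fun x hx => by simp only [decFO, bitFO_restrictWord h u hx],
    fun X hX => by simp only [decSO, bitSO_restrictWord h u hX]⟩

theorem semV_eq_semV_restrictWord [Semiring K] (M : OPM A) (φ : WFormula A K) (hV : φ.free ⊆ V)
    {u : List (AV A V)} (hu : validEnc V u) :
    semV M φ V u = semV M φ φ.free (restrictWord hV u) := by
  rw [semV, semV, if_pos hu, if_pos (hu.restrictWord hV), restrictWord_map_fst]
  exact sem_congr_agreeOn M _ φ (agreeOn_dec_restrictWord hV u)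

end Encoding

theorem Chain.of_rel_eq {M₁ : OPM A} {M₂ : OPM B} {L₁ : ℕ → Option A}
    {L₂ : ℕ → Option B}
    (hrel : ∀ i j, M₁.rel (L₁ i) (L₁ j) = M₂.rel (L₂ i) (L₂ j)) {i j : ℕ}
    (hc : Chain M₁ L₁ i j) : Chain M₂ L₂ i j :=
  Chain.rec (motive_1 := fun i j _ => ChainMid M₂ L₂ i j)
    (motive_2 := fun i j _ => ChainGap M₂ L₂ i j) (motive_3 := fun i j _ => Chain M₂ L₂ i j)
    (fun h _ ih => .last (hrel _ _ ▸ h) ih) (fun h _ _ ihg ihm => .step (hrel _ _ ▸ h) ihg ihm)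
    (fun k => .adj k) (fun _ ih => .chain ih) (fun h _ _ ihg ihm => .mk (hrel _ _ ▸ h) ihg ihm) hc

theorem letterAt_map (f : A → B) (w : List A) (i : ℕ) :
    letterAt (w.map f) i = (letterAt w i).map f := by
  unfold letterAt
  split_ifs <;> simp

theorem mem_OPWords_extOPM_iff {M : OPM A} {V : Finset Var} {u : List (AV A V)} :
    u ∈ OPWords (extOPM M V) ↔ u.map Prod.fst ∈ OPWords M := by
  have hrel : ∀ i j, (extOPM M V).rel (letterAt u i) (letterAt u j) =
      M.rel (letterAt (u.map Prod.fst) i) (letterAt (u.map Prod.fst) j) := by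
    simp [extOPM, letterAt_map]
  simp only [OPWords, Set.mem_ofPred_eq, ne_eq, List.map_eq_nil_iff, List.length_map]
  exact and_congr_right fun _ => ⟨.of_rel_eq hrel, .of_rel_eq fun i j => (hrel i j).symm⟩

theorem mem_OPWords_extOPM_of_map_fst_eq {M : OPM A} {V W : Finset Var}
    {u : List (AV A V)} {u' : List (AV A W)}
    (hf : u'.map Prod.fst = u.map Prod.fst) (hu : u ∈ OPWords (extOPM M V)) :
    u' ∈ OPWords (extOPM M W) := by
  rw [mem_OPWords_extOPM_iff, hf, ← mem_OPWords_extOPM_iff]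
  exact hu

section Extension

variable {V W : Finset Var}

def extLetter (V : Finset Var) (first : Bool) (l : AV A W) : AV A V :=
  (l.1, fun v => if hv : v.1 ∈ W then l.2 ⟨v.1, hv⟩ else first)

/-- Places every variable of `V` outside `W`, first- or second-order, at the first position. -/
def extWord (V : Finset Var) : List (AV A W) → List (AV A V)
  | [] => []
  | a :: v => extLetter V true a :: v.map (extLetter V false)

theorem transduce_extLetter (v : List (AV A W)) :
    transduce (fun _ _ => false) (extLetter V) true v = extWord V v := by
  cases v with
  | nil => rfl
  | cons a v => exact congrArg _ (transduce_eq_map_of_step_eq (fun _ _ => rfl) v)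

theorem restrictWord_extWord (h : W ⊆ V) (v : List (AV A W)) :
    restrictWord h (extWord V v) = v := by
  cases v <;> simp [extWord, restrictWord, extLetter, Function.comp_def]

theorem bitFO_extWord_of_notMem {x : ℕ} (hxV : Sum.inl x ∈ V) (hxW : Sum.inl x ∉ W)
    (v : List (AV A W)) (i : ℕ) : bitFO V (extWord V v) x i ↔ i = 1 ∧ v ≠ [] := by
  cases v <;> rcases i with _ | _ | i <;> simp [bitFO, extWord, extLetter, hxV, hxW]

theorem validEnc.extWord (h : W ⊆ V) {v : List (AV A W)} (hne : v ≠ []) (hv : validEnc W v) :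
    validEnc V (extWord V v) := by
  intro x hxV
  by_cases hxW : Sum.inl x ∈ W
  · simpa only [← bitFO_restrictWord h _ hxW, restrictWord_extWord] using hv x hxW
  · simp only [bitFO_extWord_of_notMem hxV hxW, and_iff_left hne]
    exact existsUnique_eq

theorem semV_eq_semV_extWord [Semiring K] (M : OPM A) (φ : WFormula A K) (hV : φ.free ⊆ V)
    {v : List (AV A φ.free)} (hne : v ≠ []) :
    semV M φ φ.free v = semV M φ V (extWord V v) := by
  by_cases hv : validEnc φ.free v
  · rw [semV_eq_semV_restrictWord M φ hV (hv.extWord hV hne), restrictWord_extWord]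
  · have hv' : ¬ validEnc V (extWord V v) := fun h' => hv (by
      simpa only [restrictWord_extWord] using h'.restrictWord hV)
    rw [semV, semV, if_neg hv, if_neg hv']

end Extension

theorem existsUnique_nat_iff {P : ℕ → Prop} :
    (∃! j, P j) ↔ (P 0 ∧ ∀ j, ¬ P (j + 1)) ∨ (¬ P 0 ∧ ∃! j, P (j + 1)) := by
  constructor
  · rintro ⟨_ | j, hj, hu⟩
    · exact .inl ⟨hj, fun k hk => by cases hu _ hk⟩
    · exact .inr ⟨fun h0 => (nomatch hu _ h0), j, hj, fun k hk => by cases hu _ hk; rfl⟩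
  · rintro (⟨h0, hs⟩ | ⟨h0, j, hj, hu⟩)
    · exact ⟨0, h0, fun k hk => by cases k <;> simp_all⟩
    · exact ⟨j + 1, hj, fun k hk => by cases k <;> simp_all⟩

theorem countP_eq_one_iff_existsUnique {α : Type} (p : α → Bool) (l : List α) :
    l.countP p = 1 ↔ ∃! j : ℕ, ∃ a ∈ l[j]?, p a := by
  induction l with
  | nil => simp
  | cons a l ih =>
    rw [existsUnique_nat_iff]
    by_cases ha : p a
    · simpa [ha, List.countP_eq_zero, List.mem_iff_getElem?] using forall_comm
    · simp [ha, ih]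

section Counting

/-- For each variable of `V`, the number of positions carrying its bit, saturated at `2`. -/
abbrev BitCounter (V : Finset Var) : Type := {v // v ∈ V} → Fin 3

variable {V : Finset Var}

def countStep (V : Finset Var) (c : BitCounter V) (l : AV A V) : BitCounter V :=
  fun v => ⟨min 2 (c v + if l.2 v then 1 else 0), by omega⟩

def CountAccepts (V : Finset Var) : Set (BitCounter V) :=
  {c | ∀ x (hx : Sum.inl x ∈ V), c ⟨Sum.inl x, hx⟩ = 1}

theorem val_foldl_countStep (u : List (AV A V)) (c : BitCounter V) (v : {v // v ∈ V}) :
    (u.foldl (countStep V) c v : ℕ) = min 2 (c v + u.countP (·.2 v)) := by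
  induction u generalizing c with
  | nil => simp; omega
  | cons l u ih =>
    rw [List.foldl_cons, ih, List.countP_cons]
    simp only [countStep]
    split_ifs <;> omega

theorem existsUnique_bitFO_iff (u : List (AV A V)) {x : ℕ} (hx : Sum.inl x ∈ V) :
    (∃! i, bitFO V u x i) ↔ u.countP (·.2 ⟨Sum.inl x, hx⟩) = 1 := by
  rw [countP_eq_one_iff_existsUnique, existsUnique_nat_iff]
  simp [bitFO, hx]

theorem foldl_countStep_mem_countAccepts_iff (u : List (AV A V)) :
    u.foldl (countStep V) 0 ∈ CountAccepts V ↔ validEnc V u := by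
  refine forall_congr' fun x => forall_congr' fun hx => ?_
  rw [existsUnique_bitFO_iff u hx, Fin.ext_iff, val_foldl_countStep]
  simp only [Pi.zero_apply, Fin.val_zero, zero_add, Fin.val_one]
  omega

end Counting

section Transductions

variable {V W : Finset Var}

def restrictLetter (h : W ⊆ V) (l : AV A V) : AV A W :=
  (l.1, fun v => l.2 ⟨v.1, h v.2⟩)

theorem transduce_restrictLetter {P : Type} (h : W ⊆ V) (step : P → AV A V → P) (p : P)
    (u : List (AV A V)) : transduce step (fun _ => restrictLetter h) p u = restrictWord h u :=
  transduce_eq_map_of_out_eq (f := restrictLetter h) (fun _ _ => rfl) p u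

open Classical in
theorem semV_eq_ite_transduce_restrictLetter [Semiring K] (M : OPM A) (φ : WFormula A K)
    (hV : φ.free ⊆ V) (u : List (AV A V)) :
    semV M φ V u = if u.foldl (countStep V) 0 ∈ CountAccepts V then
      semV M φ φ.free (transduce (countStep V) (fun _ => restrictLetter hV) 0 u) else 0 := by
  rw [transduce_restrictLetter]
  split_ifs with hu
  · exact semV_eq_semV_restrictWord M φ hV ((foldl_countStep_mem_countAccepts_iff u).mp hu)
  · rw [semV, if_neg (mt (foldl_countStep_mem_countAccepts_iff u).mpr hu)]

theorem semV_free_eq_ite_transduce_extLetter [Semiring K] (M : OPM A) (φ : WFormula A K)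
    (hV : φ.free ⊆ V) {v : List (AV A φ.free)} (hv : v ≠ []) :
    semV M φ φ.free v = if v.foldl (fun _ _ => false) true ∈ Set.univ then
      semV M φ V (transduce (fun _ _ => false) (extLetter V) true v) else 0 := by
  rw [if_pos (Set.mem_univ _), transduce_extLetter]
  exact semV_eq_semV_extWord M φ hV hv

end Transductions

/-- Consistency of the semantics: for `free(φ) ⊆ V`, the `V`-semantics agrees with the
`free(φ)`-semantics on valid words, and the two semantics are simultaneously regular
(resp. strictly regular). -/
theorem consistency {A K : Type} [Fintype A] [Semiring K] (M : OPM A)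
    (φ : WFormula A K) (V : Finset Var) (hV : φ.free ⊆ V) :
    (∀ u ∈ OPWords (extOPM M V), validEnc V u →
        semV M φ V u = semV M φ φ.free (restrictWord hV u)) ∧
    (Regular (extOPM M φ.free) (semV M φ φ.free) ↔
      Regular (extOPM M V) (semV M φ V)) ∧
    (StrictlyRegular (extOPM M φ.free) (semV M φ φ.free) ↔
      StrictlyRegular (extOPM M V) (semV M φ V)) := by
  classical
  have hrestr := fun u (_ : u ∈ OPWords (extOPM M V)) =>
    semV_eq_ite_transduce_restrictLetter M φ hV u
  have hext := fun v (hv : v ∈ OPWords (extOPM M φ.free)) =>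
    semV_free_eq_ite_transduce_extLetter M φ hV (V := V) hv.1
  have hmem_restr : ∀ u ∈ OPWords (extOPM M V),
      transduce (countStep V) (fun _ => restrictLetter hV) 0 u ∈ OPWords (extOPM M φ.free) :=
    fun u => mem_OPWords_extOPM_of_map_fst_eq (by
      rw [transduce_restrictLetter, restrictWord_map_fst])
  have hmem_ext : ∀ v ∈ OPWords (extOPM M φ.free),
      transduce (fun _ _ => false) (extLetter V) true v ∈ OPWords (extOPM M V) :=
    fun v => mem_OPWords_extOPM_of_map_fst_eq (by
      rw [transduce_extLetter, ← restrictWord_map_fst hV, restrictWord_extWord])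
  exact ⟨fun u _ hu => semV_eq_semV_restrictWord M φ hV hu,
    ⟨fun h => h.of_transduce hmem_restr hrestr fun _ _ _ _ => rfl,
      fun h => h.of_transduce hmem_ext hext fun _ _ _ _ => rfl⟩,
    ⟨fun h => h.of_transduce hmem_restr hrestr fun _ _ _ _ => rfl,
      fun h => h.of_transduce hmem_ext hext fun _ _ _ _ => rfl⟩⟩

end WOP
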